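/- Assume α < 1/(4n) and let 0 ≤ Z_1 < Z_2 satisfy Z_2 < 1/4. Suppose there is a node i_1 with s_{i_1}(t) ∈ [(1 − Z_2)·M(t), (1 − Z_1)·M(t)] such that s_{i_1}(t) + s_j(t) ≤ 0 for every j ∈ N_{i_1}^-(t). Then for every realization of B_t, D_t ∈ {0,1}, one step of the state-flipping update satisfies M(t+1) ≥ M(t)/4. -/

import Mathlib

/-!
The node `i₁` loses at most `α · 2n · M ≤ M / 2` through its attracting neighbours, since each
difference `s i₁ - s j` is at most `2M` in absolute value, and the repelling term cannot lower it,
since every sum `s i₁ + s j` over repelling neighbours is nonpositive. As `s i₁ ≥ (1 - Z₂) M ≥ 3M/4`,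
the new state of `i₁` is at least `M / 4`.
-/

/-- The maximum absolute state `M = max_{i ∈ V} |x i|`. -/
noncomputable def Mmax {n : ℕ} (hn : 3 ≤ n) (x : Fin n → ℝ) : ℝ :=
  Finset.univ.sup' ⟨⟨0, by omega⟩, Finset.mem_univ _⟩ fun i => |x i|

open Finset

section StateFlipping

variable {n : ℕ}

def stateFlipStep (α β B D : ℝ) (Np Nd : Fin n → Finset (Fin n)) (s : Fin n → ℝ) (i : Fin n) :
    ℝ :=
  s i - α * B * ∑ j ∈ Np i, (s i - s j) - β * D * ∑ j ∈ Nd i, (s i + s j)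

theorem abs_le_Mmax (hn : 3 ≤ n) (x : Fin n → ℝ) (i : Fin n) : |x i| ≤ Mmax hn x :=
  le_sup' (fun i => |x i|) (mem_univ i)

theorem abs_sum_sub_le_Mmax (hn : 3 ≤ n) (x : Fin n → ℝ) (i : Fin n) (N : Finset (Fin n)) :
    |∑ j ∈ N, (x i - x j)| ≤ 2 * n * Mmax hn x := by
  have hM0 : 0 ≤ Mmax hn x := (abs_nonneg _).trans (abs_le_Mmax hn x i)
  have hcard : (#N : ℝ) ≤ n := by exact_mod_cast (card_le_univ N).trans_eq (Fintype.card_fin n)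
  calc |∑ j ∈ N, (x i - x j)| ≤ ∑ j ∈ N, |x i - x j| := abs_sum_le_sum_abs _ _
    _ ≤ ∑ _j ∈ N, 2 * Mmax hn x := by
        refine sum_le_sum fun j _ => (abs_sub _ _).trans ?_
        linarith [abs_le_Mmax hn x i, abs_le_Mmax hn x j]
    _ = #N * (2 * Mmax hn x) := by rw [sum_const, nsmul_eq_mul]
    _ ≤ n * (2 * Mmax hn x) := by gcongr
    _ = 2 * n * Mmax hn x := by ring

theorem sub_le_stateFlipStep (hn : 3 ≤ n) {α β B D : ℝ} (hα : 0 ≤ α) (hβ : 0 ≤ β)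
    (hB₀ : 0 ≤ B) (hB₁ : B ≤ 1) (hD : 0 ≤ D) (Np Nd : Fin n → Finset (Fin n))
    (s : Fin n → ℝ) (i : Fin n) (hneg : ∀ j ∈ Nd i, s i + s j ≤ 0) :
    s i - α * (2 * n * Mmax hn s) ≤ stateFlipStep α β B D Np Nd s i := by
  set T := ∑ j ∈ Np i, (s i - s j)
  have hBT : B * T ≤ |T| := by
    rcases le_or_gt 0 T with hT | hT
    · nlinarith [le_abs_self T]
    · nlinarith [abs_nonneg T]
  have hattract : α * B * T ≤ α * (2 * n * Mmax hn s) := by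
    rw [mul_assoc]
    exact mul_le_mul_of_nonneg_left (hBT.trans (abs_sum_sub_le_Mmax hn s i (Np i))) hα
  have hrepel : β * D * ∑ j ∈ Nd i, (s i + s j) ≤ 0 :=
    mul_nonpos_of_nonneg_of_nonpos (mul_nonneg hβ hD) (sum_nonpos hneg)
  unfold stateFlipStep
  linarith

end StateFlipping

theorem state_flipping_nonpositive_negative_sums_lower_bound_general
    {n : ℕ} (hn : 3 ≤ n)
    (α β : ℝ) (hα : 0 < α) (hβ : 0 < β)
    (hα4n : α < 1 / (4 * (n : ℝ)))
    (Np Nd : Fin n → Finset (Fin n))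
    (B D : ℝ) (hB : B = 0 ∨ B = 1) (hD : D = 0 ∨ D = 1)
    (Z₂ : ℝ) (hZ₂ : Z₂ < 1 / 4)
    (s s' : Fin n → ℝ)
    (i₁ : Fin n)
    (hi₁l : (1 - Z₂) * Mmax hn s ≤ s i₁)
    (hneg : ∀ j ∈ Nd i₁, s i₁ + s j ≤ 0)
    (hupd : ∀ i, s' i = s i - α * B * (∑ j ∈ Np i, (s i - s j))
        - β * D * (∑ j ∈ Nd i, (s i + s j))) :
    Mmax hn s / 4 ≤ Mmax hn s' := by
  set M := Mmax hn s
  have hM0 : 0 ≤ M := (abs_nonneg _).trans (abs_le_Mmax hn s i₁)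
  have hαn : α * (2 * n * M) ≤ M / 2 := by
    have : α * (4 * n) < 1 := by
      rwa [lt_div_iff₀ (by positivity : (0 : ℝ) < 4 * n)] at hα4n
    nlinarith
  have hB₀ : 0 ≤ B := by rcases hB with rfl | rfl <;> norm_num
  have hB₁ : B ≤ 1 := by rcases hB with rfl | rfl <;> norm_num
  have hD₀ : 0 ≤ D := by rcases hD with rfl | rfl <;> norm_num
  have hstep := sub_le_stateFlipStep hn hα.le hβ.le hB₀ hB₁ hD₀ Np Nd s i₁ hneg
  rw [stateFlipStep, ← hupd] at hstep
  calc M / 4 ≤ s' i₁ := by nlinarith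
    _ ≤ |s' i₁| := le_abs_self _
    _ ≤ Mmax hn s' := abs_le_Mmax hn s' i₁

/-- suppose `α < 1/(4n)`, `0 ≤ Z₁ < Z₂ < 1/4`, and there is a node `i₁`
with `s_{i₁}(t) ∈ [(1-Z₂)M(t), (1-Z₁)M(t)]` such that `s_{i₁}(t) + s_j(t) ≤ 0` for
every `j ∈ N_{i₁}^-(t)`. Then for every realization of `B_t, D_t ∈ {0,1}`, one step
of the state-flipping update satisfies `M(t+1) ≥ M(t)/4`. -/
theorem state_flipping_nonpositive_negative_sums_lower_bound
    {n : ℕ} (hn : 3 ≤ n)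
    (α β : ℝ) (hα : 0 < α) (hβ : 0 < β)
    (hα4n : α < 1 / (4 * (n : ℝ)))
    (Np Nd : Fin n → Finset (Fin n))
    (hNp : ∀ i, i ∉ Np i) (hNd : ∀ i, i ∉ Nd i)
    (hdisj : ∀ i, Disjoint (Np i) (Nd i))
    (B D : ℝ) (hB : B = 0 ∨ B = 1) (hD : D = 0 ∨ D = 1)
    (Z₁ Z₂ : ℝ) (hZ₁ : 0 ≤ Z₁) (hZ₁₂ : Z₁ < Z₂) (hZ₂ : Z₂ < 1 / 4)
    (s s' : Fin n → ℝ)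
    (i₁ : Fin n)
    (hi₁l : (1 - Z₂) * Mmax hn s ≤ s i₁) (hi₁u : s i₁ ≤ (1 - Z₁) * Mmax hn s)
    (hneg : ∀ j ∈ Nd i₁, s i₁ + s j ≤ 0)
    (hupd : ∀ i, s' i = s i - α * B * (∑ j ∈ Np i, (s i - s j))
        - β * D * (∑ j ∈ Nd i, (s i + s j))) :
    Mmax hn s / 4 ≤ Mmax hn s' :=
  state_flipping_nonpositive_negative_sums_lower_bound_general hn α β hα hβ hα4n Np Nd B D hB hD Z₂
    hZ₂ s s' i₁ hi₁l hneg hupd
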